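/- If G is a graph of order n that contains a Hamiltonian path and α ∈ [1/2, 1], then A_α(G) has at least 2⌊n/3⌋ eigenvalues ≥ α (counted with multiplicity). -/

import Mathlib

/-!
Along a Hamiltonian path `v₀ v₁ …` the vertices `v₃ⱼ, v₃ⱼ₊₂` (`j < ⌊n/3⌋`) are the leaves of
`⌊n/3⌋` disjoint stars `v₃ⱼ - v₃ⱼ₊₁ - v₃ⱼ₊₂`. For `α ∈ [1/2, 1]` the quadratic form of `A_α(G)`
is a sum over the edges of the nonnegative terms `α (x_u² + x_w²) / 2 + (1 - α) x_u x_w`, so for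
`x` supported on the leaves the edges to the centres alone already give `α ‖x‖²`. The form is thus
`≥ α ‖x‖²` on a subspace of dimension `2⌊n/3⌋`, and by the min-max principle `A_α(G)` has at least
that many eigenvalues `≥ α`.
-/

/-- The `A_α`-matrix of a graph: `α·D(G) + (1-α)·A(G)`. -/
noncomputable def Aalpha {n : ℕ} (α : ℝ) (G : SimpleGraph (Fin n)) [DecidableRel G.Adj] :
    Matrix (Fin n) (Fin n) ℝ :=
  α • Matrix.diagonal (fun v => (G.degree v : ℝ)) + (1 - α) • G.adjMatrix ℝ

lemma Aalpha_isHermitian {n : ℕ} (α : ℝ) (G : SimpleGraph (Fin n)) [DecidableRel G.Adj] :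
    (Aalpha α G).IsHermitian := by
  apply Matrix.IsHermitian.ext
  intro i j
  by_cases h : G.Adj i j <;> by_cases hij : i = j <;>
    simp_all [Aalpha, Matrix.diagonal_apply, SimpleGraph.adj_comm, eq_comm]

open Finset Matrix Module

lemma exists_finrank_eq_card_forall_notMem_eq_zero (K : Type*) [DivisionRing K] {ι : Type*}
    [Fintype ι] (S : Finset ι) :
    ∃ W : Submodule K (ι → K), finrank K W = #S ∧ ∀ x ∈ W, ∀ v ∉ S, x v = 0 := by
  classical
  refine ⟨LinearMap.range (Function.ExtendByZero.linearMap K ((↑) : S → ι)), ?_, ?_⟩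
  · rw [LinearMap.finrank_range_of_inj (Function.extend_injective Subtype.val_injective (0 : ι → K))]
    simp
  · rintro _ ⟨y, rfl⟩ v hv
    exact Function.extend_apply' _ _ _ fun ⟨a, ha⟩ => hv (ha ▸ a.2)

lemma Submodule.finrank_le_card_diagonal_ge {K ι : Type*} [Field K] [LinearOrder K]
    [IsStrictOrderedRing K] [Fintype ι] (d : ι → K) {α : K} (W : Submodule K (ι → K))
    (hW : ∀ y ∈ W, α * (y ⬝ᵥ y) ≤ ∑ i, d i * y i ^ 2) :
    finrank K W ≤ #{i | α ≤ d i} := by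
  classical
  let restrict : W →ₗ[K] {i // α ≤ d i} → K := LinearMap.funLeft K K Subtype.val ∘ₗ W.subtype
  have hinj : Function.Injective restrict := by
    rw [← LinearMap.ker_eq_bot, LinearMap.ker_eq_bot']
    rintro ⟨y, hy⟩ hzero
    have hbig : ∀ i, α ≤ d i → y i = 0 := fun i hi => congrFun hzero ⟨i, hi⟩
    have hterm_nonneg : ∀ i, 0 ≤ (α - d i) * y i ^ 2 := fun i => by
      rcases le_or_gt α (d i) with hi | hi
      · simp [hbig i hi]
      · exact mul_nonneg (sub_pos.2 hi).le (sq_nonneg _)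
    have hsum : ∑ i, (α - d i) * y i ^ 2 ≤ 0 := by
      have := hW y hy
      simp only [dotProduct, ← sq, mul_sum] at this
      simp only [sub_mul, sum_sub_distrib]
      linarith
    have hterm := (sum_eq_zero_iff_of_nonneg fun i _ => hterm_nonneg i).1
      (le_antisymm hsum (sum_nonneg fun i _ => hterm_nonneg i))
    ext i
    rcases le_or_gt α (d i) with hi | hi
    · exact hbig i hi
    · simpa [(sub_pos.2 hi).ne'] using hterm i (mem_univ i)
  simpa [Fintype.card_subtype] using LinearMap.finrank_le_finrank_of_injective hinj

lemma Matrix.dotProduct_mulVec_eq_star_mulVec_dotProduct {R n : Type*} [CommSemiring R]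
    [StarRing R] [TrivialStar R] [Fintype n] (A : Matrix n n R) (x z : n → R) : x ⬝ᵥ A *ᵥ z = (star A *ᵥ x) ⬝ᵥ z := by
  rw [dotProduct_mulVec, star_eq_conjTranspose, conjTranspose_eq_transpose_of_trivial,
    mulVec_transpose]

/-- The easy half of the Courant–Fischer min-max principle. -/
lemma Matrix.IsHermitian.finrank_le_card_eigenvalues_ge {ι : Type*} [Fintype ι] [DecidableEq ι]
    {M : Matrix ι ι ℝ} (hM : M.IsHermitian) {α : ℝ} (W : Submodule ℝ (ι → ℝ))
    (hW : ∀ x ∈ W, α * (x ⬝ᵥ x) ≤ x ⬝ᵥ M *ᵥ x) :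
    finrank ℝ W ≤ #{i | α ≤ hM.eigenvalues i} := by
  set U := (hM.eigenvectorUnitary : Matrix ι ι ℝ)
  have hUU : U * star U = 1 := Unitary.coe_mul_star_self _
  have hspec : M = U * diagonal hM.eigenvalues * star U := by
    conv_lhs => rw [hM.spectral_theorem]
    simp [U]
  have hinj : Function.Injective (star U).mulVecLin := fun x x' h => by
    simpa [mulVec_mulVec, hUU] using congrArg (U *ᵥ ·) h
  rw [(Submodule.equivMapOfInjective _ hinj W).finrank_eq]
  refine Submodule.finrank_le_card_diagonal_ge _ _ ?_
  rintro _ ⟨x, hx, rfl⟩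
  have hnorm : x ⬝ᵥ x = (star U *ᵥ x) ⬝ᵥ (star U *ᵥ x) := by
    rw [← dotProduct_mulVec_eq_star_mulVec_dotProduct, mulVec_mulVec, hUU, one_mulVec]
  have hquad : x ⬝ᵥ M *ᵥ x = ∑ i, hM.eigenvalues i * (star U *ᵥ x) i ^ 2 := by
    conv_lhs => rw [hspec, ← mulVec_mulVec, ← mulVec_mulVec,
      dotProduct_mulVec_eq_star_mulVec_dotProduct]
    simp only [dotProduct, mulVec_diagonal]
    exact sum_congr rfl fun i _ => by ring
  simpa [hnorm, hquad] using hW x hx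

lemma SimpleGraph.sum_sum_neighborFinset_swap {V M : Type*} [Fintype V] [AddCommMonoid M]
    (G : SimpleGraph V) [DecidableRel G.Adj] (f : V → V → M) :
    ∑ u, ∑ w ∈ G.neighborFinset u, f u w = ∑ u, ∑ w ∈ G.neighborFinset u, f w u := by
  simp only [SimpleGraph.neighborFinset_eq_filter, sum_filter]
  rw [sum_comm]
  simp only [SimpleGraph.adj_comm]

lemma dotProduct_Aalpha_mulVec {n : ℕ} (α : ℝ) (G : SimpleGraph (Fin n)) [DecidableRel G.Adj]
    (x : Fin n → ℝ) :
    x ⬝ᵥ Aalpha α G *ᵥ x =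
      ∑ u, ∑ w ∈ G.neighborFinset u, (α * (x u ^ 2 + x w ^ 2) / 2 + (1 - α) * x u * x w) := by
  set F : Fin n → Fin n → ℝ := fun u w => α * x u ^ 2 + (1 - α) * x u * x w
  have hrow : x ⬝ᵥ Aalpha α G *ᵥ x = ∑ u, ∑ w ∈ G.neighborFinset u, F u w := by
    refine sum_congr rfl fun u _ => ?_
    simp only [Aalpha, add_mulVec, smul_mulVec, Pi.add_apply, Pi.smul_apply, mulVec_diagonal,
      SimpleGraph.adjMatrix_mulVec_apply, smul_eq_mul, F, sum_add_distrib, sum_const,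
      SimpleGraph.card_neighborFinset_eq_degree, nsmul_eq_mul, ← mul_sum]
    ring
  calc x ⬝ᵥ Aalpha α G *ᵥ x
      = ((∑ u, ∑ w ∈ G.neighborFinset u, F u w) + ∑ u, ∑ w ∈ G.neighborFinset u, F w u) / 2 := by
        rw [hrow, ← G.sum_sum_neighborFinset_swap F]; ring
    _ = _ := by
        simp only [← sum_add_distrib, sum_div, F]
        exact sum_congr rfl fun u _ => sum_congr rfl fun w _ => by ring

lemma mul_dotProduct_self_le_dotProduct_Aalpha_mulVec {n : ℕ} {α : ℝ} (hα0 : 1 / 2 ≤ α)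
    (hα1 : α ≤ 1) (G : SimpleGraph (Fin n)) [DecidableRel G.Adj] {S : Finset (Fin n)}
    (hS : ∀ u ∈ S, ∃ w, G.Adj u w ∧ w ∉ S) {x : Fin n → ℝ} (hx : ∀ v ∉ S, x v = 0) :
    α * (x ⬝ᵥ x) ≤ x ⬝ᵥ Aalpha α G *ᵥ x := by
  -- An edge from `u ∈ S` to `w ∉ S` has edge term exactly `α x_u² / 2`, which `R u w` records.
  set R : Fin n → Fin n → ℝ := fun u w => if w ∈ S then 0 else α * x u ^ 2 / 2
  have hR : ∀ u w, 0 ≤ R u w := fun u w => by unfold R; split_ifs <;> positivity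
  have hedge : ∀ u w, R u w + R w u ≤ α * (x u ^ 2 + x w ^ 2) / 2 + (1 - α) * x u * x w := by
    intro u w
    by_cases hu : u ∈ S <;> by_cases hw : w ∈ S <;>
      simp only [R, hu, hw, hx, if_true, if_false, not_false_eq_true] <;>
      nlinarith [mul_nonneg (sub_nonneg.2 hα1) (sq_nonneg (x u + x w)),
        mul_nonneg (by linarith : 0 ≤ 2 * α - 1) (add_nonneg (sq_nonneg (x u)) (sq_nonneg (x w)))]
  have hvertex : ∀ u, α * x u ^ 2 ≤ 2 * ∑ w ∈ G.neighborFinset u, R u w := by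
    intro u
    by_cases hu : u ∈ S
    · obtain ⟨w, hadj, hw⟩ := hS u hu
      calc α * x u ^ 2 = 2 * R u w := by simp only [R, hw, if_false]; ring
        _ ≤ 2 * ∑ w ∈ G.neighborFinset u, R u w := by
          gcongr
          exact single_le_sum (fun w _ => hR u w) ((G.mem_neighborFinset u w).2 hadj)
    · simpa [hx u hu] using sum_nonneg fun w (_ : w ∈ G.neighborFinset u) => hR u w
  calc α * (x ⬝ᵥ x) = ∑ u, α * x u ^ 2 := by simp only [dotProduct, mul_sum, sq]
    _ ≤ ∑ u, 2 * ∑ w ∈ G.neighborFinset u, R u w := sum_le_sum fun u _ => hvertex u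
    _ = ∑ u, ∑ w ∈ G.neighborFinset u, (R u w + R w u) := by
      simp only [sum_add_distrib, ← G.sum_sum_neighborFinset_swap R, ← mul_sum]
      ring
    _ ≤ ∑ u, ∑ w ∈ G.neighborFinset u,
          (α * (x u ^ 2 + x w ^ 2) / 2 + (1 - α) * x u * x w) :=
      sum_le_sum fun u _ => sum_le_sum fun w _ => hedge u w
    _ = x ⬝ᵥ Aalpha α G *ᵥ x := (dotProduct_Aalpha_mulVec α G x).symm

/-- The leaves `v₃ⱼ, v₃ⱼ₊₂` of the stars `v₃ⱼ - v₃ⱼ₊₁ - v₃ⱼ₊₂` along the path. -/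
lemma SimpleGraph.Walk.IsPath.exists_card_eq_forall_exists_adj_notMem {V : Type*}
    {G : SimpleGraph V} {u v : V} {p : G.Walk u v} (hp : p.IsPath) {k : ℕ}
    (hk : 3 * k ≤ p.length + 1) :
    ∃ S : Finset V, #S = 2 * k ∧ ∀ a ∈ S, ∃ b, G.Adj a b ∧ b ∉ S := by
  classical
  have hmem : ∀ j e, (j, e) ∈ range k ×ˢ ({0, 2} : Finset ℕ) ↔ j < k ∧ (e = 0 ∨ e = 2) := by
    simp
  have heq : ∀ i ≤ p.length, ∀ j ≤ p.length, p.getVert i = p.getVert j → i = j :=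
    fun i hi j hj => hp.getVert_injOn hi hj
  refine ⟨(range k ×ˢ {0, 2}).image fun j => p.getVert (3 * j.1 + j.2), ?_, ?_⟩
  · rw [card_image_of_injOn, card_product, card_range, card_pair (by decide), mul_comm]
    rintro ⟨j, e⟩ hje ⟨j', e'⟩ hje' h
    rw [mem_coe, hmem] at hje hje'
    have := heq _ (by omega) _ (by omega) h
    ext <;> dsimp only <;> omega
  · simp only [mem_image, Prod.exists, forall_exists_index, and_imp]
    rintro _ j e hje rfl
    rw [hmem] at hje
    refine ⟨p.getVert (3 * j + 1), ?_, ?_⟩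
    · rcases hje.2 with rfl | rfl
      · exact p.adj_getVert_succ (by omega)
      · exact (p.adj_getVert_succ (by omega)).symm
    · rintro ⟨j', e', hje', h⟩
      rw [hmem] at hje'
      have := heq _ (by omega) (3 * j + 1) (by omega) h
      omega

open Finset in
theorem Aalpha_hamiltonian_path_count (n : ℕ) (G : SimpleGraph (Fin n))
    [DecidableRel G.Adj]
    (hham : ∃ (u v : Fin n) (p : G.Walk u v), p.IsHamiltonian)
    (α : ℝ) (hα0 : 1 / 2 ≤ α) (hα1 : α ≤ 1) :
    2 * (n / 3) ≤ (univ.filter fun i : Fin n =>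
        α ≤ (Aalpha_isHermitian α G).eigenvalues i).card := by
  obtain ⟨u, v, p, hp⟩ := hham
  have hlength : p.length = n - 1 := by simpa using hp.length_eq
  obtain ⟨S, hcard, hS⟩ :=
    hp.isPath.exists_card_eq_forall_exists_adj_notMem (k := n / 3) (by omega)
  obtain ⟨W, hW, hsupp⟩ := exists_finrank_eq_card_forall_notMem_eq_zero ℝ S
  calc 2 * (n / 3) = finrank ℝ W := by rw [hW, hcard]
    _ ≤ _ := (Aalpha_isHermitian α G).finrank_le_card_eigenvalues_ge W fun x hx =>
      mul_dotProduct_self_le_dotProduct_Aalpha_mulVec hα0 hα1 G hS (hsupp x hx)
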